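/- Let f = (1/n) Σ_{i=1}^n f_i with each f_i convex, differentiable, L-smooth, and x* a minimizer of f. Then (1/(2nL)) Σ_{i=1}^n ‖∇f_i(x*) - ∇f_i(x)‖² ≤ f(x) - f(x*) for every x ∈ ℝ^d. -/

import Mathlib

/-!
Each `fᵢ` satisfies `(1/2L) ‖∇fᵢ x - ∇fᵢ y‖² ≤ fᵢ x - fᵢ y - ⟪∇fᵢ y, x - y⟫`: evaluate the
first-order convexity inequality at `y` and the smoothness upper bound at `x` at the point
`x - (∇fᵢ x - ∇fᵢ y) / L`, where the latter is minimal. Summing over `i` with `y = x*`, the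
linear terms cancel since `Σᵢ ∇fᵢ x* = 0` at the minimizer.
-/

open RealInnerProductSpace

section FirstOrder

variable {E : Type*} [NormedAddCommGroup E] [NormedSpace ℝ E] {s : Set E} {f : E → ℝ}
  {f' : E →L[ℝ] ℝ} {x y : E}

theorem ConvexOn.add_le_of_hasFDerivAt (hf : ConvexOn ℝ s f) (hx : x ∈ s) (hy : y ∈ s)
    (hf' : HasFDerivAt f f' x) : f x + f' (y - x) ≤ f y := by
  have hline : HasDerivAt (f ∘ AffineMap.lineMap (k := ℝ) x y) (f' (y - x)) 0 := by
    rw [← AffineMap.lineMap_apply_zero x y (k := ℝ)] at hf'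
    exact hf'.comp_hasDerivAt 0 AffineMap.hasDerivAt_lineMap
  have := (hf.comp_affineMap (AffineMap.lineMap x y)).le_slope_of_hasDerivAt
    (x := 0) (y := 1) (by simpa using hx) (by simpa using hy) zero_lt_one hline
  simp only [slope_def_field, Function.comp_apply, AffineMap.lineMap_apply_zero,
    AffineMap.lineMap_apply_one, sub_zero, div_one] at this
  linarith

end FirstOrder

section Gradient

variable {E : Type*} [NormedAddCommGroup E] [InnerProductSpace ℝ E] [CompleteSpace E]
  {s : Set E} {f : E → ℝ} {g x y : E}

theorem ConvexOn.add_inner_le_of_hasGradientAt (hf : ConvexOn ℝ s f) (hx : x ∈ s) (hy : y ∈ s)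
    (hg : HasGradientAt f g x) : f x + ⟪g, y - x⟫ ≤ f y := by
  simpa using hf.add_le_of_hasFDerivAt hx hy hg.hasFDerivAt

theorem IsLocalMin.hasGradientAt_eq_zero (h : IsLocalMin f x) (hg : HasGradientAt f g x) :
    g = 0 :=
  (InnerProductSpace.toDual ℝ E).injective <| by simpa using h.hasFDerivAt_eq_zero hg.hasFDerivAt

theorem HasGradientAt.sum {ι : Type*} {u : Finset ι} {f : ι → E → ℝ} {g : ι → E}
    (h : ∀ i ∈ u, HasGradientAt (f i) (g i) x) :
    HasGradientAt (fun y ↦ ∑ i ∈ u, f i y) (∑ i ∈ u, g i) x := by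
  rw [hasGradientAt_iff_hasFDerivAt, map_sum]
  exact HasFDerivAt.fun_sum fun i hi ↦ (h i hi).hasFDerivAt

end Gradient

section Cocoercive

variable {E : Type*} [NormedAddCommGroup E] [InnerProductSpace ℝ E] [CompleteSpace E]
  {f : E → ℝ} {g : E → E} {L : ℝ}

theorem ConvexOn.norm_sub_gradient_sq_le_of_smooth (hL : 0 < L) (hf : ConvexOn ℝ Set.univ f)
    (hg : ∀ x, HasGradientAt f (g x) x)
    (hs : ∀ x y, f x - f y - ⟪g y, x - y⟫ ≤ L / 2 * ‖x - y‖ ^ 2) (x y : E) :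
    1 / (2 * L) * ‖g x - g y‖ ^ 2 ≤ f x - f y - ⟪g y, x - y⟫ := by
  set u := g x - g y
  set z := x - L⁻¹ • u with hz
  have hconv := hf.add_inner_le_of_hasGradientAt (Set.mem_univ y) (Set.mem_univ z) (hg y)
  have hsmooth := hs z x
  have hzy : z - y = (x - y) - L⁻¹ • u := by rw [hz]; abel
  have hzx : z - x = -(L⁻¹ • u) := by rw [hz]; abel
  have hu : L⁻¹ * ⟪g x, u⟫ - L⁻¹ * ⟪g y, u⟫ = L⁻¹ * ‖u‖ ^ 2 := by
    rw [← mul_sub, ← inner_sub_left, real_inner_self_eq_norm_sq]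
  rw [hzy, inner_sub_right, real_inner_smul_right] at hconv
  rw [hzx, inner_neg_right, real_inner_smul_right, norm_neg, norm_smul, mul_pow,
    Real.norm_of_nonneg (inv_nonneg.mpr hL.le)] at hsmooth
  have hquad : L / 2 * (L⁻¹ ^ 2 * ‖u‖ ^ 2) = L⁻¹ * ‖u‖ ^ 2 - 1 / (2 * L) * ‖u‖ ^ 2 := by
    field_simp; ring
  rw [hquad] at hsmooth
  linarith

end Cocoercive

/-- For `f = (1/n) Σᵢ fᵢ` with convex `L`-smooth components and minimizer `x*`,
`(1/(2nL)) Σᵢ ‖∇fᵢ(x*) - ∇fᵢ(x)‖² ≤ f(x) - f(x*)` for every `x`. -/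
theorem gradient_gap_bound (d n : ℕ) (hn : 0 < n) (L : ℝ) (hL : 0 < L)
    (f : Fin n → EuclideanSpace ℝ (Fin d) → ℝ)
    (g : Fin n → EuclideanSpace ℝ (Fin d) → EuclideanSpace ℝ (Fin d))
    (hconv : ∀ i, ConvexOn ℝ Set.univ (f i))
    (hgrad : ∀ i x, HasGradientAt (f i) (g i x) x)
    (hsmooth : ∀ i x y, f i x - f i y - ⟪g i y, x - y⟫ ≤ L / 2 * ‖x - y‖ ^ 2)
    (xstar : EuclideanSpace ℝ (Fin d))
    (hmin : ∀ x, (1 / (n : ℝ)) * ∑ i, f i xstar ≤ (1 / (n : ℝ)) * ∑ i, f i x) :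
    ∀ x, (1 / (2 * (n : ℝ) * L)) * ∑ i, ‖g i xstar - g i x‖ ^ 2
      ≤ (1 / (n : ℝ)) * ∑ i, f i x - (1 / (n : ℝ)) * ∑ i, f i xstar := by
  intro x
  have hlocalMin : IsLocalMin (fun y ↦ ∑ i, f i y) xstar :=
    .of_forall fun y ↦ le_of_mul_le_mul_left (hmin y) (by positivity)
  have hzero : ∑ i, g i xstar = 0 :=
    hlocalMin.hasGradientAt_eq_zero (HasGradientAt.sum fun i _ ↦ hgrad i xstar)
  have hsum : ∑ i, 1 / (2 * L) * ‖g i xstar - g i x‖ ^ 2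
      ≤ ∑ i, (f i x - f i xstar - ⟪g i xstar, x - xstar⟫) :=
    Finset.sum_le_sum fun i _ ↦ norm_sub_rev (g i x) _ ▸
      (hconv i).norm_sub_gradient_sq_le_of_smooth hL (hgrad i) (hsmooth i) x xstar
  rw [← Finset.mul_sum, Finset.sum_sub_distrib, Finset.sum_sub_distrib, ← sum_inner, hzero,
    inner_zero_left, sub_zero] at hsum
  calc 1 / (2 * (n : ℝ) * L) * ∑ i, ‖g i xstar - g i x‖ ^ 2
      = 1 / n * (1 / (2 * L) * ∑ i, ‖g i xstar - g i x‖ ^ 2) := by ring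
    _ ≤ 1 / n * (∑ i, f i x - ∑ i, f i xstar) := by gcongr
    _ = 1 / n * ∑ i, f i x - 1 / n * ∑ i, f i xstar := mul_sub _ _ _
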